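/- Let C > 0, σ₀ > 0, λ₀ > 0 and let q be the associated function. Then for all 0 ≤ t ≤ T and all λ with 0 < λ < λ₀: ∫_t^T e^{−λ(T−s)}·q(s−t) ds ≤ (e^{−λ(T−t)}·e^{λ/(2λ₀)}/(√π·C·σ₀))·(1/√λ₀ + √λ₀/(λ₀ − λ)). -/

import Mathlib

/-! After the substitution `u = s - t` and pulling out `e^{-λ(T-t)}`, it suffices to bound
`∫₀^τ e^{λu} q(u) du`. Since `q ≥ 0` and `e^{λu} q(u)` is a multiple of `e^{-(λ₀-λ)u}` beyond
`1/(2λ₀)`, the integrand is integrable on `(0, ∞)`, so the integral is at most the one over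
`(0, ∞)`. Up to `1/(2λ₀)` we bound `e^{λu} ≤ e^{λ/(2λ₀)}` and integrate `u^{-1/2}`; the tail is
an explicit exponential integral. -/

noncomputable section

/-- The function `q = q^{κ,lam₀,σ₀}`: `q(t) = 1/(√(2πt)·C·σ₀)` for `t < 1/(2lam₀)` and
`q(t) = (√(lam₀e)/(√π·C·σ₀))·e^{−lam₀ t}` for `t ≥ 1/(2lam₀)`. -/
def qfun (C σ₀ lam₀ : ℝ) (t : ℝ) : ℝ :=
  if t < 1 / (2 * lam₀) then 1 / (Real.sqrt (2 * Real.pi * t) * C * σ₀)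
  else Real.sqrt (lam₀ * Real.exp 1) / (Real.sqrt Real.pi * C * σ₀) * Real.exp (-lam₀ * t)

open Real Set MeasureTheory

section
variable {C σ₀ lam₀ lam : ℝ}

lemma qfun_nonneg (hC : 0 ≤ C) (hσ₀ : 0 ≤ σ₀) (u : ℝ) : 0 ≤ qfun C σ₀ lam₀ u := by
  unfold qfun
  split_ifs <;> positivity

lemma qfun_eq_rpow {u : ℝ} (hu : 0 < u) (hua : u < 1 / (2 * lam₀)) :
    qfun C σ₀ lam₀ u = (√(2 * π) * C * σ₀)⁻¹ * u ^ (-(1 / 2) : ℝ) := by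
  rw [qfun, if_pos hua, sqrt_mul (by positivity), rpow_neg hu.le, ← sqrt_eq_rpow]
  ring

lemma exp_mul_qfun_of_le {u : ℝ} (hua : 1 / (2 * lam₀) ≤ u) :
    exp (lam * u) * qfun C σ₀ lam₀ u =
      √(lam₀ * exp 1) / (√π * C * σ₀) * exp ((lam - lam₀) * u) := by
  rw [qfun, if_neg (not_lt.2 hua), sub_mul, sub_eq_add_neg, exp_add]
  ring_nf

lemma intervalIntegrable_qfun (hlam₀ : 0 < lam₀) :
    IntervalIntegrable (qfun C σ₀ lam₀) volume 0 (1 / (2 * lam₀)) := by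
  have hrpow := intervalIntegral.intervalIntegrable_rpow' (r := -(1 / 2)) (a := 0)
    (b := 1 / (2 * lam₀)) (by norm_num)
  refine (hrpow.const_mul (√(2 * π) * C * σ₀)⁻¹).congr_uIoo fun u hu => ?_
  rw [uIoo_of_le (by positivity)] at hu
  exact (qfun_eq_rpow hu.1 hu.2).symm

lemma integral_qfun (hlam₀ : 0 < lam₀) :
    ∫ u in (0 : ℝ)..1 / (2 * lam₀), qfun C σ₀ lam₀ u = 1 / (√π * C * σ₀ * √lam₀) := by
  rw [intervalIntegral.integral_congr_uIoo
      (g := fun u => (√(2 * π) * C * σ₀)⁻¹ * u ^ (-(1 / 2) : ℝ)),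
    intervalIntegral.integral_const_mul, integral_rpow (Or.inl (by norm_num)),
    zero_rpow (by norm_num), show (-(1 / 2) : ℝ) + 1 = 1 / 2 by norm_num, ← sqrt_eq_rpow,
    one_div (2 * lam₀), sqrt_inv, sqrt_mul zero_le_two, sqrt_mul zero_le_two]
  · have : 0 < √lam₀ := sqrt_pos.2 hlam₀
    field_simp
    rw [sq_sqrt zero_le_two]
    ring
  · intro u hu
    rw [uIoo_of_le (by positivity)] at hu
    exact qfun_eq_rpow hu.1 hu.2

lemma intervalIntegrable_exp_mul_qfun (hlam₀ : 0 < lam₀) :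
    IntervalIntegrable (fun u => exp (lam * u) * qfun C σ₀ lam₀ u) volume 0 (1 / (2 * lam₀)) :=
  (intervalIntegrable_qfun hlam₀).continuousOn_mul (by fun_prop)

lemma integral_exp_mul_qfun_head_le (hC : 0 ≤ C) (hσ₀ : 0 ≤ σ₀) (hlam₀ : 0 < lam₀)
    (hlam0 : 0 ≤ lam) :
    ∫ u in (0 : ℝ)..1 / (2 * lam₀), exp (lam * u) * qfun C σ₀ lam₀ u ≤
      exp (lam / (2 * lam₀)) / (√π * C * σ₀) * (1 / √lam₀) := by
  calc ∫ u in (0 : ℝ)..1 / (2 * lam₀), exp (lam * u) * qfun C σ₀ lam₀ u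
      ≤ ∫ u in (0 : ℝ)..1 / (2 * lam₀), exp (lam / (2 * lam₀)) * qfun C σ₀ lam₀ u := by
        refine intervalIntegral.integral_mono_on (by positivity) (intervalIntegrable_exp_mul_qfun
          hlam₀) ((intervalIntegrable_qfun hlam₀).const_mul _) fun u hu => ?_
        have hlamu : lam * u ≤ lam / (2 * lam₀) := by
          simpa only [mul_one_div] using mul_le_mul_of_nonneg_left hu.2 hlam0
        exact mul_le_mul_of_nonneg_right (exp_le_exp.2 hlamu) (qfun_nonneg hC hσ₀ u)
    _ = exp (lam / (2 * lam₀)) / (√π * C * σ₀) * (1 / √lam₀) := by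
        rw [intervalIntegral.integral_const_mul, integral_qfun hlam₀]
        ring

lemma sqrt_mul_exp_one_mul_exp (hlam₀ : 0 < lam₀) :
    √(lam₀ * exp 1) * exp ((lam - lam₀) * (1 / (2 * lam₀))) = √lam₀ * exp (lam / (2 * lam₀)) := by
  rw [sqrt_mul hlam₀.le, ← exp_half, mul_assoc, ← exp_add]
  congr 2
  field_simp
  ring

lemma integrableOn_exp_mul_qfun_Ioi (hlam : lam < lam₀) :
    IntegrableOn (fun u => exp (lam * u) * qfun C σ₀ lam₀ u) (Ioi (1 / (2 * lam₀))) :=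
  IntegrableOn.congr_fun ((integrableOn_exp_mul_Ioi (sub_neg.2 hlam) _).const_mul _)
    (fun _ hu => (exp_mul_qfun_of_le (le_of_lt hu)).symm) measurableSet_Ioi

lemma integral_exp_mul_qfun_Ioi (hlam₀ : 0 < lam₀) (hlam : lam < lam₀) :
    ∫ u in Ioi (1 / (2 * lam₀)), exp (lam * u) * qfun C σ₀ lam₀ u =
      exp (lam / (2 * lam₀)) / (√π * C * σ₀) * (√lam₀ / (lam₀ - lam)) := by
  rw [setIntegral_congr_fun measurableSet_Ioi fun _ hu => exp_mul_qfun_of_le (le_of_lt hu),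
    integral_const_mul, integral_exp_mul_Ioi (sub_neg.2 hlam), neg_div, ← div_neg, neg_sub]
  linear_combination sqrt_mul_exp_one_mul_exp (lam := lam) hlam₀ / (√π * C * σ₀) / (lam₀ - lam)

lemma integrableOn_exp_mul_qfun_Ioi_zero (hlam₀ : 0 < lam₀) (hlam : lam < lam₀) :
    IntegrableOn (fun u => exp (lam * u) * qfun C σ₀ lam₀ u) (Ioi 0) := by
  rw [← Ioc_union_Ioi_eq_Ioi (by positivity : (0 : ℝ) ≤ 1 / (2 * lam₀))]
  exact ((intervalIntegrable_iff_integrableOn_Ioc_of_le (by positivity)).1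
    (intervalIntegrable_exp_mul_qfun hlam₀)).union (integrableOn_exp_mul_qfun_Ioi hlam)

lemma integral_exp_mul_qfun_le (hC : 0 ≤ C) (hσ₀ : 0 ≤ σ₀) (hlam₀ : 0 < lam₀)
    (hlam0 : 0 ≤ lam) (hlam : lam < lam₀) {τ : ℝ} (hτ : 0 ≤ τ) :
    ∫ u in (0 : ℝ)..τ, exp (lam * u) * qfun C σ₀ lam₀ u ≤
      exp (lam / (2 * lam₀)) / (√π * C * σ₀) * (1 / √lam₀ + √lam₀ / (lam₀ - lam)) := by
  set f := fun u => exp (lam * u) * qfun C σ₀ lam₀ u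
  have hf_nonneg (u : ℝ) : 0 ≤ f u := mul_nonneg (exp_pos _).le (qfun_nonneg hC hσ₀ u)
  calc ∫ u in (0 : ℝ)..τ, f u
      = (∫ u in Ioi 0, f u) - ∫ u in Ioi τ, f u :=
        (intervalIntegral.integral_Ioi_sub_Ioi (integrableOn_exp_mul_qfun_Ioi_zero hlam₀ hlam)
          hτ).symm
    _ ≤ ∫ u in Ioi 0, f u := sub_le_self _ (setIntegral_nonneg measurableSet_Ioi fun u _ =>
        hf_nonneg u)
    _ = (∫ u in (0 : ℝ)..1 / (2 * lam₀), f u) + ∫ u in Ioi (1 / (2 * lam₀)), f u :=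
        (intervalIntegral.integral_interval_add_Ioi' (intervalIntegrable_exp_mul_qfun hlam₀)
          (integrableOn_exp_mul_qfun_Ioi hlam)).symm
    _ ≤ _ := by
        rw [integral_exp_mul_qfun_Ioi hlam₀ hlam, mul_add]
        gcongr
        exact integral_exp_mul_qfun_head_le hC hσ₀ hlam₀ hlam0

end

theorem stmt12_general (C σ₀ lam₀ : ℝ) (hC : 0 < C) (hσ₀ : 0 < σ₀) (hlam₀ : 0 < lam₀)
    (t T lam : ℝ) (htT : t ≤ T) (hlam0 : 0 < lam) (hlam : lam < lam₀) :
    ∫ s in t..T, Real.exp (-lam * (T - s)) * qfun C σ₀ lam₀ (s - t) ≤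
      Real.exp (-lam * (T - t)) * Real.exp (lam / (2 * lam₀)) /
          (Real.sqrt Real.pi * C * σ₀) *
        (1 / Real.sqrt lam₀ + Real.sqrt lam₀ / (lam₀ - lam)) := by
  have hshift := intervalIntegral.integral_comp_sub_right
    (fun u => exp (lam * u) * qfun C σ₀ lam₀ u) t (a := t) (b := T)
  rw [sub_self] at hshift
  have hfactor : ∫ s in t..T, exp (-lam * (T - s)) * qfun C σ₀ lam₀ (s - t) =
      exp (-lam * (T - t)) * ∫ u in (0 : ℝ)..T - t, exp (lam * u) * qfun C σ₀ lam₀ u := by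
    rw [← hshift, ← intervalIntegral.integral_const_mul]
    congr 1 with s
    rw [← mul_assoc, ← exp_add]
    ring_nf
  rw [hfactor, mul_div_assoc, mul_assoc]
  exact mul_le_mul_of_nonneg_left (integral_exp_mul_qfun_le hC.le hσ₀.le hlam₀
    hlam0.le hlam (sub_nonneg.2 htT)) (exp_pos _).le

/-- `∫_t^T e^{−λ(T−s)} q(s−t) ds ≤ (e^{−λ(T−t)} e^{λ/(2λ₀)}/(√π C σ₀))(1/√λ₀ + √λ₀/(λ₀−λ))`. -/
theorem stmt12 (C σ₀ lam₀ : ℝ) (hC : 0 < C) (hσ₀ : 0 < σ₀) (hlam₀ : 0 < lam₀)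
    (t T lam : ℝ) (ht : 0 ≤ t) (htT : t ≤ T) (hlam0 : 0 < lam) (hlam : lam < lam₀) :
    ∫ s in t..T, Real.exp (-lam * (T - s)) * qfun C σ₀ lam₀ (s - t) ≤
      Real.exp (-lam * (T - t)) * Real.exp (lam / (2 * lam₀)) /
          (Real.sqrt Real.pi * C * σ₀) *
        (1 / Real.sqrt lam₀ + Real.sqrt lam₀ / (lam₀ - lam)) :=
  stmt12_general C σ₀ lam₀ hC hσ₀ hlam₀ t T lam htT hlam0 hlam
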